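/- For every n ≥ 2 and every tree (a,v) ∈ H_b^n (so v ∈ H_c^{n−1}), the Lie-algebra evaluation satisfies X_{(a,v)} = −(−2)^{|f(v)|_a} · 2^{|f(v)|_b} · X_b; in particular, writing X_v = γ_c(v)·X_c, one has X_{(a,v)} = −γ_c(v)·X_b. -/
import Mathlib


/-! STATEMENT 9: for every `(a,v) ∈ H_b^n` (`n ≥ 2`, `v ∈ H_c^{n−1}`),
`X_{(a,v)} = −(−2)^{|f(v)|_a}·2^{|f(v)|_b}·X_b = −γ_c(v)·X_b`. -/

/-- The three-letter alphabet `A = {a, b, c}`. -/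
inductive Letter : Type
  | a | b | c
deriving DecidableEq

/-- Words on the alphabet. -/
abbrev Word := List Letter

/-- The free magma `M(A)` on the alphabet: binary complete planar rooted trees
with leaves labelled by letters (fully parenthesized expressions). -/
inductive FM : Type
  | leaf : Letter → FM
  | node : FM → FM → FM
deriving DecidableEq

/-- The foliage map `f : M(A) → A*` (drop all brackets). -/
def fol : FM → Word
  | FM.leaf d => [d]
  | FM.node t t' => fol t ++ fol t'

/-! ### The ordered families of trees `H_b^n`, `H_c^n`

Each level is built as a *sorted list* (increasing with respect to the total
order of the construction); across levels, trees of higher level (with more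
leaves) are *smaller*.  The `H_c`-levels are produced by a single
table-building recursion. -/

/-- Table of the levels `H_c^1, …, H_c^n` (entry `i` is the sorted list of the
trees of `H_c^i`; entry `0` is empty).

* `H_c^1 = {c}`.
* For `m = 2k` even, `H_c^m = ⋃_{i=1}^{k} {(v,w) : v ∈ H_b^i, w ∈ H_c^{m−i}}`,
  ordered lexicographically (`(v,w) < (v′,w′)` iff `v < v′`, or `v = v′` and
  `w < w′`; `v`'s with more leaves are smaller, so the blocks appear for
  `i = k, k−1, …, 1`), where `H_b^1 = {b}` and `H_b^i = {(a,v′) : v′ ∈ H_c^{i−1}}`.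
* For `m = 2k+1` odd, additionally the block
  `E_k = {((a,v),w) : v, w ∈ H_c^k, v ≥ w}` is prepended (its elements are
  smaller than all other elements of `H_c^m`), ordered lexicographically in
  `(v,w)`. -/
def HClevels : ℕ → List (List FM)
  | 0 => [[]]
  | n + 1 =>
    let t := HClevels n
    let C : ℕ → List FM := fun i => t.getD i []
    let m := n + 1
    let k := m / 2
    let prods : List FM :=
      (List.range k).flatMap (fun j =>
        let i := k - j
        if i = 1 then
          (C (m - 1)).map (fun w => FM.node (FM.leaf Letter.b) w)
        else
          (C (i - 1)).flatMap (fun v =>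
            (C (m - i)).map (fun w =>
              FM.node (FM.node (FM.leaf Letter.a) v) w)))
    let Ck := C k
    let Ek : List FM :=
      (List.range Ck.length).flatMap (fun r =>
        (List.range (r + 1)).map (fun s =>
          FM.node (FM.node (FM.leaf Letter.a) (Ck.getD r (FM.leaf Letter.a)))
            (Ck.getD s (FM.leaf Letter.a))))
    let Cm : List FM :=
      if m = 1 then [FM.leaf Letter.c]
      else if m % 2 = 0 then prods
      else Ek ++ prods
    t ++ [Cm]

/-- The level `H_c^n`, as a sorted (increasing) list of trees. -/
def HCn (n : ℕ) : List FM := (HClevels n).getD n []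

/-- The level `H_b^n`, as a sorted (increasing) list of trees:
`H_b^1 = {b}` and `H_b^n = {(a,v) : v ∈ H_c^{n−1}}` with the inherited order. -/
def HBn : ℕ → List FM
  | 0 => []
  | 1 => [FM.leaf Letter.b]
  | n + 2 => (HCn (n + 1)).map (fun v => FM.node (FM.leaf Letter.a) v)

/-- The level (number of leaves) of a tree. -/
def lev (h : FM) : ℕ := (fol h).length

/-- Position of a tree inside its level `H_c^{lev h}`. -/
def cIdx (h : FM) : ℕ := (HCn (lev h)).findIdx (fun x => decide (x = h))

/-- Position of a tree inside its level `H_b^{lev h}`. -/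
def bIdx (h : FM) : ℕ := (HBn (lev h)).findIdx (fun x => decide (x = h))

/-- The strict total order on `H_c = ⋃_n H_c^n`: trees of higher level are
smaller, trees of the same level are compared by position in the sorted level. -/
def cLt (v w : FM) : Prop := lev w < lev v ∨ (lev v = lev w ∧ cIdx v < cIdx w)

/-- `v ≤ w` in `H_c`. -/
def cLe (v w : FM) : Prop := cLt v w ∨ v = w

/-- The strict total order on `H_b = ⋃_n H_b^n`: trees of higher level are
smaller, trees of the same level are compared by position in the sorted level. -/
def bLt (v w : FM) : Prop := lev w < lev v ∨ (lev v = lev w ∧ bIdx v < bIdx w)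

/-- `v ≤ w` in `H_b`. -/
def bLe (v w : FM) : Prop := bLt v w ∨ v = w

/-- The evaluation `M(A) → L`, `t ↦ X_t`, extending `d ↦ X_d` by
`X_{(t,t′)} = ⁅X_t, X_{t′}⁆`. -/
def Xev {L : Type*} [LieRing L] [LieAlgebra ℝ L] (X : Letter → L) : FM → L
  | FM.leaf d => X d
  | FM.node t t' => ⁅Xev X t, Xev X t'⁆

/-- `γ_c(v) = (−2)^{|f(v)|_a}·2^{|f(v)|_b}`, so that `X_v = γ_c(v)·X_c` for `v ∈ H_c`. -/
def gammaC (v : FM) : ℤ :=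
  (-2 : ℤ) ^ ((fol v).count Letter.a) * (2 : ℤ) ^ ((fol v).count Letter.b)

lemma HClevels_length (n : ℕ) : (HClevels n).length = n + 1 := by
  induction n with
  | zero => rfl
  | succ n ih => simp [HClevels, ih]

lemma HClevels_getD {m n : ℕ} (h : m ≤ n) : (HClevels n).getD m [] = HCn m := by
  induction n with
  | zero =>
    interval_cases m
    rfl
  | succ n ih =>
    rcases Nat.lt_or_ge m (n + 1) with hm | hm
    · rw [HClevels]
      rw [List.getD_append _ _ _ _ (by rw [HClevels_length]; omega)]
      exact ih (by omega)
    · have : m = n + 1 := by omega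
      subst this
      rfl

lemma mem_HCn_succ {n : ℕ} {v : FM} (hn : 1 ≤ n) (hv : v ∈ HCn (n + 1)) :
    (∃ w, w ∈ HCn n ∧ v = FM.node (FM.leaf Letter.b) w) ∨
    (∃ i₁ i₂ p q, i₁ ≤ n ∧ i₂ ≤ n ∧ p ∈ HCn i₁ ∧ q ∈ HCn i₂ ∧
       v = FM.node (FM.node (FM.leaf Letter.a) p) q) := by
  rw [HCn, HClevels] at hv
  simp only at hv
  rw [List.getD_append_right _ _ _ _ (by rw [HClevels_length])] at hv
  rw [HClevels_length] at hv
  simp only [Nat.sub_self, List.getD_cons_zero] at hv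
  set m := n + 1 with hm
  have hm1 : m ≠ 1 := by omega
  rw [if_neg hm1] at hv
  set k := m / 2 with hk
  have hk1 : 1 ≤ k := by omega
  have hkn : k ≤ n := by omega
  -- common treatment of the `prods` part
  have hprods : ∀ u : FM,
      u ∈ (List.range k).flatMap (fun j =>
        let i := k - j
        if i = 1 then
          ((HClevels n).getD (m - 1) []).map (fun w => FM.node (FM.leaf Letter.b) w)
        else
          ((HClevels n).getD (i - 1) []).flatMap (fun v =>
            (((HClevels n).getD (m - i) []).map (fun w =>
              FM.node (FM.node (FM.leaf Letter.a) v) w)))) →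
      (∃ w, w ∈ HCn n ∧ u = FM.node (FM.leaf Letter.b) w) ∨
      (∃ i₁ i₂ p q, i₁ ≤ n ∧ i₂ ≤ n ∧ p ∈ HCn i₁ ∧ q ∈ HCn i₂ ∧
         u = FM.node (FM.node (FM.leaf Letter.a) p) q) := by
    intro u hu
    rw [List.mem_flatMap] at hu
    obtain ⟨j, hj, hu⟩ := hu
    rw [List.mem_range] at hj
    simp only at hu
    by_cases hi : k - j = 1
    · rw [if_pos hi] at hu
      rw [List.mem_map] at hu
      obtain ⟨w, hw, rfl⟩ := hu
      left
      refine ⟨w, ?_, rfl⟩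
      rw [HClevels_getD (by omega)] at hw
      have : m - 1 = n := by omega
      rwa [this] at hw
    · rw [if_neg hi] at hu
      rw [List.mem_flatMap] at hu
      obtain ⟨p, hp, hu⟩ := hu
      rw [List.mem_map] at hu
      obtain ⟨q, hq, rfl⟩ := hu
      right
      have h2 : 2 ≤ k - j := by omega
      rw [HClevels_getD (by omega)] at hp
      rw [HClevels_getD (by omega)] at hq
      exact ⟨k - j - 1, m - (k - j), p, q, by omega, by omega, hp, hq, rfl⟩
  by_cases hpar : m % 2 = 0
  · rw [if_pos hpar] at hv
    exact hprods v hv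
  · rw [if_neg hpar] at hv
    rw [List.mem_append] at hv
    rcases hv with hv | hv
    · rw [List.mem_flatMap] at hv
      obtain ⟨r, hr, hv⟩ := hv
      rw [List.mem_map] at hv
      obtain ⟨s, hs, rfl⟩ := hv
      rw [List.mem_range] at hr hs
      right
      have hck : (HClevels n).getD k [] = HCn k := HClevels_getD hkn
      have hr' : r < ((HClevels n).getD k []).length := hr
      refine ⟨k, k, _, _, by omega, by omega, ?_, ?_, rfl⟩
      · rw [← hck]
        rw [List.getD_eq_getElem _ _ hr]
        exact List.getElem_mem _
      · rw [← hck]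
        rw [List.getD_eq_getElem _ _ (by omega : s < ((HClevels n).getD k []).length)]
        exact List.getElem_mem _
    · exact hprods v hv

lemma gammaC_bnode (w : FM) :
    gammaC (FM.node (FM.leaf Letter.b) w) = 2 * gammaC w := by
  simp [gammaC, fol, List.count_append, List.count_cons, pow_succ]
  ring

lemma gammaC_anode (p q : FM) :
    gammaC (FM.node (FM.node (FM.leaf Letter.a) p) q) =
      -2 * (gammaC p * gammaC q) := by
  simp [gammaC, fol, List.count_append, List.count_cons, pow_succ, pow_add]
  ring

lemma Xev_HCn {L : Type*} [LieRing L] [LieAlgebra ℝ L] (X : Letter → L)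
    (hac : ⁅X Letter.a, X Letter.c⁆ = -X Letter.b)
    (hbc : ⁅X Letter.b, X Letter.c⁆ = (2 : ℝ) • X Letter.c) :
    ∀ m : ℕ, ∀ v ∈ HCn m, Xev X v = ((gammaC v : ℤ) : ℝ) • X Letter.c := by
  intro m
  induction m using Nat.strong_induction_on with
  | _ m ih =>
    match m with
    | 0 => intro v hv; simp [HCn, HClevels] at hv
    | 1 =>
      intro v hv
      have h1 : HCn 1 = [FM.leaf Letter.c] := rfl
      rw [h1, List.mem_singleton] at hv
      subst hv
      simp [Xev, gammaC, fol]
    | n + 2 =>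
      intro v hv
      rcases mem_HCn_succ (by omega) hv with ⟨w, hw, rfl⟩ |
        ⟨i₁, i₂, p, q, h1, h2, hp, hq, rfl⟩
      · have ihw := ih (n + 1) (by omega) w hw
        show ⁅X Letter.b, Xev X w⁆ = _
        rw [ihw, lie_smul, hbc, gammaC_bnode]
        push_cast
        module
      · have ihp := ih i₁ (by omega) p hp
        have ihq := ih i₂ (by omega) q hq
        show ⁅⁅X Letter.a, Xev X p⁆, Xev X q⁆ = _
        rw [ihp, ihq, lie_smul, lie_smul, hac, smul_lie, neg_lie, hbc, gammaC_anode]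
        push_cast
        module

/-- In a real Lie algebra with `⁅X_a,X_b⁆ = 2X_a`, `⁅X_a,X_c⁆ = −X_b`,
`⁅X_b,X_c⁆ = 2X_c`, for every `n ≥ 2` and every `v ∈ H_c^{n−1}` (so that
`(a,v) ∈ H_b^n`), one has `X_{(a,v)} = −(−2)^{|f(v)|_a}·2^{|f(v)|_b}·X_b`,
i.e. `X_{(a,v)} = −γ_c(v)·X_b`. -/
theorem Xev_mem_HBn {L : Type*} [LieRing L] [LieAlgebra ℝ L] (X : Letter → L)
    (hab : ⁅X Letter.a, X Letter.b⁆ = (2 : ℝ) • X Letter.a)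
    (hac : ⁅X Letter.a, X Letter.c⁆ = -X Letter.b)
    (hbc : ⁅X Letter.b, X Letter.c⁆ = (2 : ℝ) • X Letter.c) :
    ∀ n : ℕ, 2 ≤ n → ∀ v ∈ HCn (n - 1),
      Xev X (FM.node (FM.leaf Letter.a) v) =
          (-((-2 : ℝ) ^ ((fol v).count Letter.a) * (2 : ℝ) ^ ((fol v).count Letter.b))) •
            X Letter.b ∧
      Xev X (FM.node (FM.leaf Letter.a) v) = (-(gammaC v) : ℝ) • X Letter.b := by
  intro n hn v hv
  have h1 : 1 ≤ n - 1 := by omega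
  have hvX := Xev_HCn X hac hbc (n - 1) v hv
  have key : Xev X (FM.node (FM.leaf Letter.a) v) = (-(gammaC v) : ℝ) • X Letter.b := by
    show ⁅X Letter.a, Xev X v⁆ = _
    rw [hvX, lie_smul, hac]
    push_cast
    module
  refine ⟨?_, key⟩
  rw [key]
  congr 1
  push_cast [gammaC]
  ring
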